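/- Let K be a convex body (compact convex set with nonempty interior) in ℝ². If the central symmetral K̄ = (1/2)(K - K) is a parallelogram, then K is a translate of K̄. -/

import Mathlib

open Set Metric Pointwise

noncomputable section

abbrev Plane := EuclideanSpace ℝ (Fin 2)

/-- A convex body in the plane: compact, convex, with nonempty interior. -/
def IsConvexBody (K : Set Plane) : Prop :=
  IsCompact K ∧ Convex ℝ K ∧ (interior K).Nonempty

/-- Two sets touch: disjoint interiors but nonempty intersection. -/
def Touches (A B : Set Plane) : Prop :=
  Disjoint (interior A) (interior B) ∧ (A ∩ B).Nonempty

/-- A Hadwiger configuration for `S`: translates of `S` by the `x i`,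
pairwise non-overlapping, each touching `S`. -/
def IsHadwigerConfig (S : Set Plane) {n : ℕ} (x : Fin n → Plane) : Prop :=
  (∀ i, Touches (x i +ᵥ S) S) ∧
  ∀ i j, i ≠ j → Disjoint (interior (x i +ᵥ S)) (interior (x j +ᵥ S))

/-- The Hadwiger number of a set `S`. -/
def hadwiger (S : Set Plane) : ℕ :=
  sSup {n : ℕ | ∃ x : Fin n → Plane, IsHadwigerConfig S x}

/-- A topological disk: a set homeomorphic to the closed unit disk. -/
def IsTopDisk (S : Set Plane) : Prop :=
  Nonempty (S ≃ₜ (closedBall (0 : Plane) 1))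

/-- Cyclic successor on `Fin n`. -/
def cyclicSucc {n : ℕ} (hn : 0 < n) (i : Fin n) : Fin n :=
  ⟨(i + 1) % n, Nat.mod_lt _ hn⟩

/-- Points on the boundary of `C`, occurring in cyclic order along the boundary
(each consecutive pair spans an edge of the convex polygon they generate). -/
def IsInscribedCycle (C : Set Plane) {n : ℕ} (hn : 0 < n) (x : Fin n → Plane) : Prop :=
  (∀ i, x i ∈ frontier C) ∧
  ∀ i, segment ℝ (x i) (x (cyclicSucc hn i)) ⊆ frontier (convexHull ℝ (Set.range x))

/-- The perimeter of the boundary of `C` measured in the norm whose unit ball is `B`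
(via the gauge of `B`): supremum of perimeters of inscribed polygons. -/
def normPerimeter (B C : Set Plane) : ℝ :=
  sSup {s : ℝ | ∃ (n : ℕ) (hn : 0 < n) (x : Fin n → Plane), 3 ≤ n ∧
    IsInscribedCycle C hn x ∧ s = ∑ i, gauge B (x (cyclicSucc hn i) - x i)}

/-- A parallelogram: a translate of the convex hull of `{0, a, b, a+b}` with
`a, b` linearly independent (equivalently, an invertible affine image of a square). -/
def IsParallelogram (P : Set Plane) : Prop :=
  ∃ (v a b : Plane), LinearIndependent ℝ ![a, b] ∧
    P = v +ᵥ convexHull ℝ {0, a, b, a + b}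

/-- `J` is parallelogram-like: there is a unit direction `u` and two parallel
supporting lines of `conv J` with direction `u` whose intersections with `J` are
segments of the same positive length `lam`, and `lam • u + J` touches `J`. -/
def ParallelogramLike (J : Set Plane) : Prop :=
  ∃ (u w : Plane) (lam : ℝ) (p₁ q₁ p₂ q₂ : Plane),
    ‖u‖ = 1 ∧ w ≠ 0 ∧ (inner ℝ w u : ℝ) = 0 ∧ 0 < lam ∧
    J ∩ {y | (inner ℝ w y : ℝ) = sSup ((fun y => (inner ℝ w y : ℝ)) '' convexHull ℝ J)} =
      segment ℝ p₁ q₁ ∧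
    J ∩ {y | (inner ℝ w y : ℝ) = sInf ((fun y => (inner ℝ w y : ℝ)) '' convexHull ℝ J)} =
      segment ℝ p₂ q₂ ∧
    ‖q₁ - p₁‖ = lam ∧ ‖q₂ - p₂‖ = lam ∧
    Touches (lam • u +ᵥ J) J

/-!
If `(1/2)(K - K) = v + P` with `P` the parallelepiped of a basis, every coordinate functional
varies by at most `1` on `K`, since `(x - y)/2` and `(y - x)/2` both lie in `v + P`. So `K` fits
inside a translate `t + (1/2)(K - K)`. Since `K - K` is convex and symmetric, both sets have the
difference set `K - K`; and a closed convex set inside a compact set with the same difference set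
is all of it, for a functional separating a missing point would see a larger width on the bigger
set.
-/

open Module

theorem IsCompact.sub {G : Type*} [AddGroup G] [TopologicalSpace G] [IsTopologicalAddGroup G]
    {s t : Set G} (hs : IsCompact s) (ht : IsCompact t) : IsCompact (s - t) := by
  rw [sub_eq_add_neg]
  exact hs.add ht.neg

section CentralSymmetral

variable {E : Type*} [AddCommGroup E] [Module ℝ E]

def centralSymmetral (K : Set E) : Set E :=
  (2⁻¹ : ℝ) • (K - K)

theorem Convex.centralSymmetral_sub_centralSymmetral {K : Set E} (hK : Convex ℝ K) :
    centralSymmetral K - centralSymmetral K = K - K := by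
  have hsymm : -centralSymmetral K = centralSymmetral K := by
    rw [centralSymmetral, ← smul_set_neg, neg_sub]
  rw [sub_eq_add_neg, hsymm, centralSymmetral, ← (hK.sub hK).add_smul (by norm_num) (by norm_num)]
  norm_num

theorem LinearMap.sub_le_of_mapsTo_centralSymmetral (ℓ : E →ₗ[ℝ] ℝ) {K : Set E} {c w : ℝ}
    (h : MapsTo ℓ (centralSymmetral K) (Icc c (c + w))) {x y : E} (hx : x ∈ K) (hy : y ∈ K) :
    ℓ x - ℓ y ≤ w := by
  have hxy := (h (smul_mem_smul_set (sub_mem_sub hx hy))).2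
  have hyx := (h (smul_mem_smul_set (sub_mem_sub hy hx))).1
  simp only [map_smul, map_sub, smul_eq_mul] at hxy hyx
  linarith

theorem exists_subset_vadd_parallelepiped {ι : Type*} [Fintype ι] (B : Basis ι ℝ E)
    {K : Set E} (hne : K.Nonempty)
    (hwidth : ∀ i, ∀ x ∈ K, ∀ y ∈ K, B.repr x i - B.repr y i ≤ 1) :
    ∃ s : E, K ⊆ s +ᵥ parallelepiped B := by
  obtain ⟨x₀, hx₀⟩ := hne
  let m i := sInf ((B.repr · i) '' K)
  have hbdd i : BddBelow ((B.repr · i) '' K) := by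
    refine ⟨B.repr x₀ i - 1, ?_⟩
    rintro _ ⟨y, hy, rfl⟩
    linarith [hwidth i x₀ hx₀ y hy]
  refine ⟨B.equivFun.symm m, fun x hx => ?_⟩
  rw [mem_vadd_set_iff_neg_vadd_mem, parallelepiped_basis_eq]
  intro i
  have hm : B.repr (B.equivFun.symm m) i = m i := by
    rw [← B.equivFun_apply, LinearEquiv.apply_symm_apply]
  have hlow : m i ≤ B.repr x i := csInf_le (hbdd i) ⟨x, hx, rfl⟩
  have hupp : B.repr x i - 1 ≤ m i := by
    refine le_csInf ⟨_, x, hx, rfl⟩ ?_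
    rintro _ ⟨y, hy, rfl⟩
    linarith [hwidth i x hx y hy]
  simp only [vadd_eq_add, map_add, map_neg, Finsupp.add_apply, Finsupp.neg_apply, hm, mem_Icc]
  constructor <;> linarith

theorem exists_subset_vadd_centralSymmetral {ι : Type*} [Fintype ι] (B : Basis ι ℝ E)
    {K : Set E} (hne : K.Nonempty) {v : E} (hK : centralSymmetral K = v +ᵥ parallelepiped B) :
    ∃ t : E, K ⊆ t +ᵥ centralSymmetral K := by
  have hcoord i : MapsTo (B.coord i) (centralSymmetral K) (Icc (B.repr v i) (B.repr v i + 1)) := by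
    rw [hK]
    rintro _ ⟨p, hp, rfl⟩
    rw [parallelepiped_basis_eq] at hp
    obtain ⟨h0, h1⟩ := hp i
    simp only [Basis.coord_apply, vadd_eq_add, map_add, mem_Icc]
    constructor <;> linarith
  obtain ⟨s, hs⟩ := exists_subset_vadd_parallelepiped B hne fun i _ hx _ hy =>
    (B.coord i).sub_le_of_mapsTo_centralSymmetral (hcoord i) hx hy
  exact ⟨s - v, by rwa [hK, vadd_vadd, sub_add_cancel]⟩

variable [TopologicalSpace E] [IsTopologicalAddGroup E] [ContinuousSMul ℝ E]
  [LocallyConvexSpace ℝ E]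

theorem Convex.eq_of_subset_of_sub_subset_sub {A B : Set E} (hA : Convex ℝ A)
    (hAc : IsClosed A) (hB : IsCompact B) (hAB : A ⊆ B) (hsub : B - B ⊆ A - A) : A = B := by
  refine hAB.antisymm fun z hzB => by_contra fun hzA => ?_
  obtain ⟨ℓ, u, hA_lt, hu_lt⟩ := geometric_hahn_banach_closed_point hA hAc hzA
  obtain ⟨d, hd, hmax⟩ := (hB.sub hB).exists_isMaxOn ⟨z - z, sub_mem_sub hzB hzB⟩
    ℓ.continuous.continuousOn
  obtain ⟨x, hx, y, hy, rfl⟩ := hsub hd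
  have hzy : ℓ (z - y) ≤ ℓ (x - y) := hmax (sub_mem_sub hzB (hAB hy))
  rw [map_sub, map_sub] at hzy
  linarith [hA_lt x hx]

theorem Convex.exists_eq_vadd_centralSymmetral_of_parallelepiped [T2Space E]
    {ι : Type*} [Fintype ι] (B : Basis ι ℝ E) {K : Set E} (hKconv : Convex ℝ K)
    (hKc : IsCompact K) (hne : K.Nonempty) {v : E}
    (hK : centralSymmetral K = v +ᵥ parallelepiped B) :
    ∃ t : E, K = t +ᵥ centralSymmetral K := by
  obtain ⟨t, ht⟩ := exists_subset_vadd_centralSymmetral B hne hK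
  refine ⟨t, hKconv.eq_of_subset_of_sub_subset_sub hKc.isClosed
    (((hKc.sub hKc).smul _).vadd t) ht ?_⟩
  rw [vadd_sub_vadd_comm, sub_self, zero_vadd, hKconv.centralSymmetral_sub_centralSymmetral]

end CentralSymmetral

theorem convexHull_parallelogram_eq_parallelepiped (a b : Plane) :
    convexHull ℝ {0, a, b, a + b} = parallelepiped ![a, b] := by
  rw [parallelepiped_eq_convexHull, Fin.sum_univ_two, Matrix.cons_val_zero, Matrix.cons_val_one,
    pair_add, zero_vadd, vadd_set_insert, vadd_set_singleton, vadd_eq_add, add_zero]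
  congr 1
  ext
  simp only [mem_insert_iff, mem_singleton_iff, mem_union]
  tauto

/-- If the central symmetral of a convex body `K` is a parallelogram,
then `K` is a translate of it. -/
theorem stmt_0 (K : Set Plane) (hK : IsConvexBody K)
    (hpar : IsParallelogram ((2⁻¹ : ℝ) • (K - K))) :
    ∃ t : Plane, K = t +ᵥ (2⁻¹ : ℝ) • (K - K) := by
  obtain ⟨hKc, hKconv, hKint⟩ := hK
  obtain ⟨v, a, b, hli, hpar⟩ := hpar
  let B := basisOfLinearIndependentOfCardEqFinrank hli (by simp)
  have hB : parallelepiped B = convexHull ℝ {0, a, b, a + b} := by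
    rw [coe_basisOfLinearIndependentOfCardEqFinrank, convexHull_parallelogram_eq_parallelepiped]
  rw [← hB] at hpar
  exact hKconv.exists_eq_vadd_centralSymmetral_of_parallelepiped B hKc
    (hKint.mono interior_subset) hpar
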